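/- A word w is a conjugate of u^p (the p-th power of u) if and only if, writing BWT(u) = b_1 b_2 ... b_{|u|}, one has BWT(w) = b_1^p b_2^p ... b_{|u|}^p. -/

import Mathlib

namespace BWTpaper

variable {A : Type*}

/-- Lexicographic `≤` (as a `Bool`) on lists, induced by a strict order `lt` on letters. -/
def lexLe (lt : A → A → Bool) : List A → List A → Bool
  | [], _ => true
  | _ :: _, [] => false
  | x :: xs, y :: ys => if lt x y then true else if lt y x then false else lexLe lt xs ys

/-- The list of all rotations (conjugates, with multiplicity) of a word. -/
def rotations (w : List A) : List (List A) := (List.range w.length).map (fun i => w.rotate i)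

/-- Burrows-Wheeler transform with respect to a strict order `lt` on letters. -/
def bwtBy (lt : A → A → Bool) (w : List A) : List A :=
  ((rotations w).mergeSort (lexLe lt)).filterMap List.getLast?

def stdLt [LinearOrder A] : A → A → Bool := fun x y => decide (x < y)

/-- Burrows-Wheeler transform w.r.t. the order of a `LinearOrder` alphabet. -/
def bwt [LinearOrder A] (w : List A) : List A := bwtBy stdLt w

def Conjugate (u v : List A) : Prop := ∃ x y : List A, u = x ++ y ∧ v = y ++ x

/-- `u^p`. -/
def wordPow (u : List A) (p : ℕ) : List A := (List.replicate p u).flatten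

def Primitive (w : List A) : Prop := w ≠ [] ∧ ∀ (u : List A) (k : ℕ), w = wordPow u k → k = 1

/-- The letters of the alphabet, sorted increasingly w.r.t. `lt`. -/
noncomputable def sortedAlphabet [Fintype A] (lt : A → A → Bool) : List A :=
  Finset.univ.toList.mergeSort (fun x y => !(lt y x))

/-- `w` is `π`-clustering w.r.t. the letter order `lt`:
its BWT is `π(a₁)^{k₁} ⋯ π(a_d)^{k_d}` where `a₁ < ⋯ < a_d` and `k_i = |w|_{π(a_i)}`. -/
def IsClusteringBy [Fintype A] [DecidableEq A] (lt : A → A → Bool) (π : Equiv.Perm A)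
    (w : List A) : Prop :=
  bwtBy lt w = (sortedAlphabet lt).flatMap (fun c => List.replicate (w.count (π c)) (π c))

def IsClustering [Fintype A] [LinearOrder A] (π : Equiv.Perm A) (w : List A) : Prop :=
  IsClusteringBy stdLt π w

/-- The prefix of length `n` of the periodic infinite word `u^ω`. -/
def omegaTake (u : List A) (n : ℕ) : List A := ((List.replicate n u).flatten).take n

/-- The ω-order: `u ≤_ω v` iff `u^ω ≤ v^ω` lexicographically (decided on the first
`|u| + |v|` letters, which suffices by Fine and Wilf). -/
def omegaLe (lt : A → A → Bool) (u v : List A) : Bool :=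
  lexLe lt (omegaTake u (u.length + v.length)) (omegaTake v (u.length + v.length))

/-- Extended Burrows-Wheeler transform of a multiset (list) of words. -/
def ebwtBy (lt : A → A → Bool) (W : List (List A)) : List A :=
  ((W.flatMap rotations).mergeSort (omegaLe lt)).filterMap List.getLast?

/-- A multiset of words is `π`-clustering if its eBWT consists of the blocks
`π(a₁)^{k₁} ⋯ π(a_d)^{k_d}` with `k_i` the total number of occurrences of `π(a_i)`. -/
def IsClusteringMultisetBy [Fintype A] [DecidableEq A] (lt : A → A → Bool)
    (π : Equiv.Perm A) (W : List (List A)) : Prop :=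
  ebwtBy lt W =
    (sortedAlphabet lt).flatMap
      (fun c => List.replicate ((W.map (fun w => w.count (π c))).sum) (π c))

/-- The morphism `α_{a,b} : a ↦ ab`, `c ↦ c` for `c ≠ a`. -/
def alphaM [DecidableEq A] (a b : A) (w : List A) : List A :=
  w.flatMap (fun c => if c = a then [a, b] else [c])

/-- The morphism `α̃_{a,b} : a ↦ ba`, `c ↦ c` for `c ≠ a`. -/
def tildeM [DecidableEq A] (a b : A) (w : List A) : List A :=
  w.flatMap (fun c => if c = a then [b, a] else [c])

/-!
Rotating `u^p` by `i` gives `(u.rotate i)^p`, so the rotations of `u^p` are the `p`-th powers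
of the rotations of `u`, each taken `p` times. Powers of words of equal length compare as the
words do, so the sorted rotations of `u^p` are `r^p, …, r^p` (`p` copies) for `r` running
through the sorted rotations of `u`, and their last letters give `b₁^p ⋯ b_n^p`. Conversely,
the BWT of a word determines the multiset of its rotations (repeatedly prepend the BWT as a
column and sort), so two words with the same BWT are conjugate.
-/

open List

@[simp] theorem wordPow_zero (u : List A) : wordPow u 0 = [] := rfl

theorem wordPow_succ (u : List A) (p : ℕ) : wordPow u (p + 1) = u ++ wordPow u p := by
  simp [wordPow, replicate_succ]

theorem wordPow_succ' (u : List A) (p : ℕ) : wordPow u (p + 1) = wordPow u p ++ u := by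
  simp [wordPow, replicate_succ']

@[simp] theorem nil_wordPow (p : ℕ) : wordPow ([] : List A) p = [] := by
  simp [wordPow]

theorem length_wordPow (u : List A) (p : ℕ) : (wordPow u p).length = p * u.length := by
  simp [wordPow]

theorem append_wordPow_comm (x y : List A) (q : ℕ) :
    x ++ wordPow (y ++ x) q = wordPow (x ++ y) q ++ x := by
  induction q with
  | zero => simp
  | succ q ih => simp only [wordPow_succ', ← append_assoc, ih]

theorem rotate_one_wordPow (u : List A) (p : ℕ) :
    (wordPow u p).rotate 1 = wordPow (u.rotate 1) p := by
  rcases u with _ | ⟨a, t⟩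
  · simp
  rcases p with _ | q
  · simp
  calc (wordPow (a :: t) (q + 1)).rotate 1 = t ++ ([a] ++ wordPow (t ++ [a]) q) := by
        rw [wordPow_succ, cons_append, rotate_cons_succ, rotate_zero, append_wordPow_comm]
        simp
    _ = wordPow ((a :: t).rotate 1) (q + 1) := by
        rw [rotate_cons_succ, rotate_zero, wordPow_succ, append_assoc]

theorem rotate_wordPow (u : List A) (p i : ℕ) :
    (wordPow u p).rotate i = wordPow (u.rotate i) p := by
  induction i with
  | zero => simp
  | succ i ih => rw [← rotate_rotate, ih, rotate_one_wordPow, rotate_rotate]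

theorem getLast?_wordPow (r : List A) {p : ℕ} (hp : p ≠ 0) :
    (wordPow r p).getLast? = r.getLast? := by
  obtain ⟨q, rfl⟩ := Nat.exists_eq_succ_of_ne_zero hp
  rw [wordPow_succ', getLast?_append]
  rcases eq_or_ne r [] with rfl | hr
  · simp
  · simp [getLast?_eq_some_getLast hr]

theorem wordPow_perm_flatMap_replicate (L : List A) (p : ℕ) :
    wordPow L p ~ L.flatMap (replicate p) := by
  classical
  refine perm_iff_count.mpr fun a => ?_
  simp only [wordPow, count_flatten, count_flatMap, map_replicate, sum_replicate, smul_eq_mul]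
  induction L with
  | nil => simp
  | cons b L ih => simp [count_cons, count_replicate, mul_add, ih, add_comm]

theorem map_range_mul_mod (f : ℕ → A) (n p : ℕ) :
    (range (p * n)).map (fun i => f (i % n)) = wordPow ((range n).map f) p := by
  induction p with
  | zero => simp
  | succ p ih =>
    rw [Nat.succ_mul, range_add, map_append, ih, wordPow_succ', map_map]
    congr 1
    refine map_congr_left fun i hi => ?_
    simp [Nat.mod_eq_of_lt (mem_range.mp hi)]

theorem length_rotations (w : List A) : (rotations w).length = w.length := by
  simp [rotations]

theorem length_of_mem_rotations {w r : List A} (h : r ∈ rotations w) : r.length = w.length := by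
  obtain ⟨i, -, rfl⟩ := mem_map.mp h
  exact length_rotate w i

theorem ne_nil_of_mem_rotations {w r : List A} (h : r ∈ rotations w) : r ≠ [] := by
  obtain ⟨i, hi, rfl⟩ := mem_map.mp h
  exact ne_nil_of_length_pos (by simp only [mem_range] at hi; simp; omega)

theorem map_take_length_rotations (w : List A) : (rotations w).map (take w.length) = rotations w :=
  map_congr_left (fun r hr => by rw [← length_of_mem_rotations hr, take_length]; rfl) |>.trans
    (map_id _)

theorem map_rotate_rotations (w : List A) (j : ℕ) :
    (rotations w).map (rotate · j) = rotations (w.rotate j) := by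
  simp only [rotations, map_map, length_rotate]
  refine map_congr_left fun i _ => ?_
  simp [rotate_rotate, Nat.add_comm]

theorem rotations_eq_cyclicPermutations {w : List A} (hw : w ≠ []) :
    rotations w = cyclicPermutations w :=
  ext_getElem (by rw [length_rotations, length_cyclicPermutations_of_ne_nil _ hw])
    fun i _ _ => by simp [rotations, getElem_cyclicPermutations]

theorem rotations_perm_iff_isRotated {w w' : List A} :
    rotations w ~ rotations w' ↔ w ~r w' := by
  rcases eq_or_ne w [] with rfl | hw
  · simp [rotations, eq_comm (a := ([] : List A)), isRotated_nil_iff']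
  rcases eq_or_ne w' [] with rfl | hw'
  · simp [rotations, isRotated_nil_iff, hw]
  rw [rotations_eq_cyclicPermutations hw, rotations_eq_cyclicPermutations hw']
  exact ⟨fun h => mem_cyclicPermutations_iff.mp (h.subset (mem_cyclicPermutations_self w)),
    fun h => h.cyclicPermutations.perm⟩

theorem conjugate_iff_isRotated {u v : List A} : Conjugate u v ↔ u ~r v := by
  constructor
  · rintro ⟨x, y, rfl, rfl⟩
    exact isRotated_append
  · rintro ⟨n, rfl⟩
    exact ⟨_, _, (take_append_drop (n % u.length) u).symm, rotate_eq_drop_append_take_mod⟩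

theorem rotations_wordPow (u : List A) (p : ℕ) :
    rotations (wordPow u p) = wordPow ((rotations u).map (wordPow · p)) p := by
  rw [rotations, rotations, length_wordPow, map_map, ← map_range_mul_mod]
  exact map_congr_left fun i _ => by simp only [rotate_wordPow, Function.comp_apply, rotate_mod]

theorem filterMap_flatMap_replicate {β : Type*} (f : A → Option β) (l : List A) (p : ℕ) :
    (l.flatMap (replicate p)).filterMap f = (l.filterMap f).flatMap (replicate p) := by
  induction l with
  | nil => rfl
  | cons a l ih =>
    rw [flatMap_cons, filterMap_append, ih, filterMap_replicate]
    cases h : f a <;> simp [h]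

theorem mem_flatMap_replicate {x : A} {l : List A} {p : ℕ} :
    x ∈ l.flatMap (replicate p) ↔ p ≠ 0 ∧ x ∈ l := by
  simp [mem_flatMap, mem_replicate, and_comm]

theorem take_succ_rotate_length_sub_one {r : List A} {k : ℕ} (hk : k < r.length) :
    (r.rotate (r.length - 1)).take (k + 1) =
      r.getLast (ne_nil_of_length_pos (by omega)) :: r.take k := by
  have hr : r ≠ [] := ne_nil_of_length_pos (by omega)
  obtain ⟨d, x, rfl⟩ : ∃ d x, r = d ++ [x] := ⟨_, _, (dropLast_concat_getLast hr).symm⟩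
  simp only [getLast_append_singleton, length_append, length_singleton,
    Nat.add_sub_cancel] at hk ⊢
  rw [rotate_append_length_eq, singleton_append, take_succ_cons,
    take_append_of_le_length (by omega : k ≤ d.length)]

theorem zipWith_cons_filterMap_getLast? {M : List (List A)} {n k : ℕ}
    (hM : ∀ r ∈ M, r.length = n) (hk : k < n) :
    zipWith cons (M.filterMap getLast?) (M.map (take k)) =
      M.map fun r => (r.rotate (n - 1)).take (k + 1) := by
  induction M with
  | nil => rfl
  | cons r M ih =>
    have hr := hM r mem_cons_self
    rw [filterMap_cons_some (getLast?_eq_some_getLast (ne_nil_of_length_pos (by omega))),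
      map_cons, map_cons, zipWith_cons_cons, ih fun r' h => hM r' (mem_cons_of_mem _ h)]
    subst hr
    rw [take_succ_rotate_length_sub_one hk]

section

variable [LinearOrder A]

theorem lexLe_stdLt_iff (u v : List A) : lexLe stdLt u v = true ↔ u ≤ v := by
  induction u generalizing v with
  | nil => simp [lexLe, ← not_lt, not_lt_nil]
  | cons x xs ih =>
    cases v with
    | nil => simp [lexLe, ← not_lt, nil_lt_cons]
    | cons y ys =>
      rw [← not_lt, cons_lt_cons_iff]
      rcases lt_trichotomy x y with h | rfl | h
      · simp [lexLe, stdLt, h, h.not_gt, h.ne']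
      · simp [lexLe, stdLt, ih]
      · simp [lexLe, stdLt, h, h.not_gt]

theorem lexLe_stdLt : lexLe stdLt = fun u v : List A => decide (u ≤ v) := by
  funext u v
  exact Bool.eq_iff_iff.mpr ((lexLe_stdLt_iff u v).trans decide_eq_true_iff.symm)

theorem nil_le' (l : List A) : [] ≤ l := by
  cases l with
  | nil => exact le_rfl
  | cons a l => exact (nil_lt_cons a l).le

theorem take_le_take_of_lt {u v : List A} (h : u < v) (k : ℕ) : u.take k ≤ v.take k := by
  change Lex (· < ·) u v at h
  induction h generalizing k with
  | nil => simpa using nil_le' _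
  | cons _ ih =>
    cases k with
    | zero => exact le_rfl
    | succ k => exact cons_le_cons _ (ih k)
  | rel h =>
    cases k with
    | zero => exact le_rfl
    | succ k => exact le_of_lt (Lex.rel h)

theorem monotone_take (k : ℕ) : Monotone (List.take (α := A) k) :=
  fun _ _ h => h.lt_or_eq.elim (take_le_take_of_lt · k) (fun h => h ▸ le_rfl)

theorem append_lt_append_of_lt_of_length_eq {u v : List A} (h : u < v)
    (hl : u.length = v.length) (a b : List A) : u ++ a < v ++ b := by
  induction h with
  | nil => simp at hl
  | cons _ ih => exact Lex.cons (ih (by simpa using hl))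
  | rel h => exact Lex.rel h

theorem mergeSort_eq_of_perm {l l' : List A} (h : l ~ l') :
    l.mergeSort (· ≤ ·) = l'.mergeSort (· ≤ ·) :=
  Perm.eq_of_sortedLE sortedLE_mergeSort sortedLE_mergeSort
    ((mergeSort_perm l _).trans (h.trans (mergeSort_perm l' _).symm))

theorem mergeSort_map_of_monotone {β : Type*} [LinearOrder β] {f : A → β} (hf : Monotone f)
    (l : List A) : (l.map f).mergeSort (· ≤ ·) = (l.mergeSort (· ≤ ·)).map f :=
  Perm.eq_of_sortedLE sortedLE_mergeSort
    (sortedLE_iff_pairwise.mpr ((pairwise_map.mpr (sortedLE_mergeSort.pairwise.imp (hf ·)))))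
    ((mergeSort_perm _ _).trans ((mergeSort_perm l _).map f).symm)

theorem wordPow_le_wordPow {r r' : List A} (hl : r.length = r'.length) (h : r ≤ r') (p : ℕ) :
    wordPow r p ≤ wordPow r' p := by
  rcases h.lt_or_eq with h | rfl
  · rcases p with _ | p
    · exact le_rfl
    · rw [wordPow_succ, wordPow_succ]
      exact (append_lt_append_of_lt_of_length_eq h hl _ _).le
  · exact le_rfl

theorem bwt_eq_filterMap (w : List A) :
    bwt w = ((rotations w).mergeSort (· ≤ ·)).filterMap getLast? := by
  rw [bwt, bwtBy, lexLe_stdLt]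

theorem length_bwt (w : List A) : (bwt w).length = w.length := by
  rw [bwt_eq_filterMap, length_filterMap_eq_countP, countP_eq_length.mpr, length_mergeSort,
    length_rotations]
  intro r hr
  simpa using ne_nil_of_mem_rotations (mem_mergeSort.mp hr)

theorem bwt_eq_of_isRotated {w w' : List A} (h : w ~r w') : bwt w = bwt w' := by
  rw [bwt_eq_filterMap, bwt_eq_filterMap, mergeSort_eq_of_perm (rotations_perm_iff_isRotated.mpr h)]

theorem mergeSort_rotations_wordPow (u : List A) (p : ℕ) :
    (rotations (wordPow u p)).mergeSort (· ≤ ·) =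
      (((rotations u).mergeSort (· ≤ ·)).flatMap (replicate p)).map (wordPow · p) := by
  set S := (rotations u).mergeSort (· ≤ ·)
  have hS : S ~ rotations u := mergeSort_perm _ _
  refine Perm.eq_of_sortedLE sortedLE_mergeSort ?_ ?_
  · have hT : (S.flatMap (replicate p)).Pairwise (· ≤ ·) :=
      pairwise_flatMap.mpr ⟨fun r _ => pairwise_replicate.mpr (Or.inr le_rfl),
        sortedLE_mergeSort.pairwise.imp fun hab x hx y hy => by
          rwa [eq_of_mem_replicate hx, eq_of_mem_replicate hy]⟩
    refine sortedLE_iff_pairwise.mpr (pairwise_map.mpr (hT.imp_of_mem fun ha hb hab => ?_))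
    have hlen {r} (hr : r ∈ S.flatMap (replicate p)) : r.length = u.length :=
      length_of_mem_rotations (hS.subset (mem_flatMap_replicate.mp hr).2)
    exact wordPow_le_wordPow ((hlen ha).trans (hlen hb).symm) hab p
  · calc (rotations (wordPow u p)).mergeSort (· ≤ ·)
        _ ~ rotations (wordPow u p) := mergeSort_perm _ _
        _ ~ ((rotations u).map (wordPow · p)).flatMap (replicate p) := by
          rw [rotations_wordPow]; exact wordPow_perm_flatMap_replicate _ _
        _ = ((rotations u).flatMap (replicate p)).map (wordPow · p) := by
          simp [flatMap_map, map_flatMap]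
        _ ~ (S.flatMap (replicate p)).map (wordPow · p) := (hS.symm.flatMap_right _).map _

theorem bwt_wordPow (u : List A) (p : ℕ) : bwt (wordPow u p) = (bwt u).flatMap (replicate p) := by
  rw [bwt_eq_filterMap, mergeSort_rotations_wordPow, filterMap_map, bwt_eq_filterMap,
    ← filterMap_flatMap_replicate]
  refine filterMap_congr fun r hr => ?_
  exact getLast?_wordPow r (mem_flatMap_replicate.mp hr).1

/-- Up to order, `bwtPrefixes (bwt w) k` consists of the length-`k` prefixes of the rotations of
`w`: prepending the last column `bwt w` to the sorted length-`k` prefixes yields the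
length-`k + 1` prefixes of the rotations shifted by one letter (the classical inverse BWT). -/
def bwtPrefixes (L : List A) : ℕ → List (List A)
  | 0 => replicate L.length []
  | k + 1 => zipWith cons L ((bwtPrefixes L k).mergeSort (· ≤ ·))

theorem bwtPrefixes_bwt_perm (w : List A) {k : ℕ} (hk : k ≤ w.length) :
    bwtPrefixes (bwt w) k ~ (rotations w).map (take k) := by
  induction k with
  | zero => simp [bwtPrefixes, length_bwt, rotations, Function.comp_def]
  | succ k ih =>
    set M := (rotations w).mergeSort (· ≤ ·)
    have hM : ∀ r ∈ M, r.length = w.length :=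
      fun r hr => length_of_mem_rotations (mem_mergeSort.mp hr)
    have hsorted : (bwtPrefixes (bwt w) k).mergeSort (· ≤ ·) = M.map (take k) := by
      rw [mergeSort_eq_of_perm (ih (by omega)), mergeSort_map_of_monotone (monotone_take k)]
    calc bwtPrefixes (bwt w) (k + 1)
        _ = (M.map (rotate · (w.length - 1))).map (take (k + 1)) := by
          rw [bwtPrefixes, hsorted, bwt_eq_filterMap,
            zipWith_cons_filterMap_getLast? hM (by omega), map_map]
          rfl
        _ ~ ((rotations w).map (rotate · (w.length - 1))).map (take (k + 1)) :=
          ((mergeSort_perm _ _).map _).map _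
        _ = (rotations (w.rotate (w.length - 1))).map (take (k + 1)) := by
          rw [map_rotate_rotations]
        _ ~ (rotations w).map (take (k + 1)) :=
          (rotations_perm_iff_isRotated.mpr (IsRotated.forall w _)).map _

theorem rotations_perm_of_bwt_eq {w w' : List A} (h : bwt w = bwt w') :
    rotations w ~ rotations w' := by
  have hlen : w.length = w'.length := by rw [← length_bwt, h, length_bwt]
  have h₁ := bwtPrefixes_bwt_perm w le_rfl
  have h₂ := bwtPrefixes_bwt_perm w' le_rfl
  rw [map_take_length_rotations, h, hlen] at h₁
  rw [map_take_length_rotations] at h₂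
  exact h₁.symm.trans h₂

theorem bwt_eq_bwt_iff {w w' : List A} : bwt w = bwt w' ↔ w ~r w' :=
  ⟨fun h => rotations_perm_iff_isRotated.mp (rotations_perm_of_bwt_eq h), bwt_eq_of_isRotated⟩

end

theorem conjugate_pow_iff_bwt_general [LinearOrder A] (u w : List A) (p : ℕ) :
    Conjugate w (wordPow u p) ↔ bwt w = (bwt u).flatMap (fun b => List.replicate p b) := by
  rw [conjugate_iff_isRotated, ← bwt_wordPow, bwt_eq_bwt_iff]

/-- `w` is a conjugate of `u^p` iff, writing `BWT(u) = b₁ ⋯ b_n`,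
`BWT(w) = b₁^p ⋯ b_n^p`. -/
theorem conjugate_pow_iff_bwt [LinearOrder A] (u w : List A) (p : ℕ) (hp : 1 ≤ p) :
    Conjugate w (wordPow u p) ↔ bwt w = (bwt u).flatMap (fun b => List.replicate p b) :=
  conjugate_pow_iff_bwt_general u w p

end BWTpaper
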